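/- If φ − α is bijective with linear inverse ψ, then for every w ∈ W and every j ∈ ℕ one has φ_∞( Σ_{i=1}^{j+1} ψ^i(w) ⊗ e_{j−i+1} ) = w ⊗ e_j. In particular φ_∞ is surjective whenever φ − α is bijective. -/

import Mathlib

/-!
Peeling off the term `i = 1` writes the sum for `(j + 1, w)` as `ψ w ⊗ e_{j+1}` plus the sum
for `(j, ψ w)`. Since `(φ - α) ψ = 1`, `φ_∞` sends the first summand to
`w ⊗ e_{j+1} - ψ w ⊗ e_j` and, by induction on `j`, the second to `ψ w ⊗ e_j`. Hence every
`w ⊗ e_j` lies in the range of `φ_∞`, and these span `W_∞`.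
-/

open Finset

theorem Finset.sum_Icc_one_succ' {M : Type*} [AddCommMonoid M] (f : ℕ → M) (n : ℕ) :
    ∑ i ∈ Icc 1 (n + 1), f i = ∑ i ∈ Icc 1 n, f (i + 1) + f 1 := by
  rw [← insert_Icc_add_one_left_eq_Icc (by omega), sum_insert (by simp), ← map_add_right_Icc,
    sum_map, add_comm]
  rfl

theorem Finsupp.surjective_of_single_mem_range {R ι M N : Type*} [Semiring R]
    [AddCommMonoid M] [Module R M] [AddCommMonoid N] [Module R N] (Φ : N →ₗ[R] ι →₀ M)
    (h : ∀ i m, Finsupp.single i m ∈ LinearMap.range Φ) : Function.Surjective Φ := by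
  rw [← LinearMap.range_eq_top, eq_top_iff, ← Finsupp.iSup_lsingle_range, iSup_le_iff]
  rintro i _ ⟨m, rfl⟩
  exact h i m

section NeumannSum

variable {R M : Type*} [Semiring R] [AddCommGroup M] [Module R M]

/-- The Neumann series `Σ_i ψ^{i+1} S^i (w ⊗ e_j)` for `(A - S)⁻¹`, where `S` is the shift
`e_k ↦ e_{k-1}`; it is a finite sum since `S^{j+1}` kills `e_j`. -/
noncomputable def neumannSum (ψ : Module.End R M) (j : ℕ) (w : M) : ℕ →₀ M :=
  ∑ i ∈ Icc 1 (j + 1), Finsupp.single (j + 1 - i) ((ψ ^ i) w)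

theorem neumannSum_succ (ψ : Module.End R M) (j : ℕ) (w : M) :
    neumannSum ψ (j + 1) w = neumannSum ψ j (ψ w) + Finsupp.single (j + 1) (ψ w) := by
  unfold neumannSum
  rw [sum_Icc_one_succ', pow_one, Nat.add_sub_cancel]
  congr 1
  refine sum_congr rfl fun i _ => ?_
  rw [Nat.add_sub_add_right, pow_succ, Module.End.mul_apply]

theorem map_neumannSum {A ψ : Module.End R M} {Φ : (ℕ →₀ M) →ₗ[R] ℕ →₀ M}
    (hΦ : ∀ k w, Φ (Finsupp.single k w) =
      Finsupp.single k (A w) - if k = 0 then 0 else Finsupp.single (k - 1) w)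
    (hAψ : A * ψ = 1) (j : ℕ) (w : M) :
    Φ (neumannSum ψ j w) = Finsupp.single j w := by
  have hA : ∀ v, A (ψ v) = v := fun v => by simpa using LinearMap.congr_fun hAψ v
  induction j generalizing w with
  | zero => simp [neumannSum, hΦ, hA]
  | succ j ih =>
    rw [neumannSum_succ, map_add, ih, hΦ, if_neg j.succ_ne_zero, hA, Nat.add_sub_cancel,
      add_sub_cancel]

end NeumannSum

theorem phi_infty_surjective_of_invertible_general {W : Type*} [AddCommGroup W] [Module ℂ W]
    (φ : Module.End ℂ W) (α : ℂ)
    (Φ : (ℕ →₀ W) →ₗ[ℂ] (ℕ →₀ W))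
    (hΦ : ∀ (k : ℕ) (w : W),
      Φ (Finsupp.single k w) =
        Finsupp.single k ((φ - α • 1) w) -
          (if k = 0 then 0 else Finsupp.single (k - 1) w))
    (ψ : Module.End ℂ W)
    (hψ₂ : (φ - α • 1) * ψ = 1) :
    (∀ (w : W) (j : ℕ),
      Φ (∑ i ∈ Finset.Icc 1 (j + 1), Finsupp.single (j + 1 - i) ((ψ ^ i) w)) =
        Finsupp.single j w) ∧
    Function.Surjective Φ := by
  have hpreimage : ∀ w j, Φ (neumannSum ψ j w) = Finsupp.single j w :=
    fun w j => map_neumannSum hΦ hψ₂ j w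
  exact ⟨hpreimage, Finsupp.surjective_of_single_mem_range Φ fun j w => ⟨_, hpreimage w j⟩⟩

theorem phi_infty_surjective_of_invertible {W : Type*} [AddCommGroup W] [Module ℂ W]
    (φ : Module.End ℂ W) (α : ℂ)
    (Φ : (ℕ →₀ W) →ₗ[ℂ] (ℕ →₀ W))
    (hΦ : ∀ (k : ℕ) (w : W),
      Φ (Finsupp.single k w) =
        Finsupp.single k ((φ - α • 1) w) -
          (if k = 0 then 0 else Finsupp.single (k - 1) w))
    (ψ : Module.End ℂ W)
    (hψ₁ : ψ * (φ - α • 1) = 1) (hψ₂ : (φ - α • 1) * ψ = 1) :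
    (∀ (w : W) (j : ℕ),
      Φ (∑ i ∈ Finset.Icc 1 (j + 1), Finsupp.single (j + 1 - i) ((ψ ^ i) w)) =
        Finsupp.single j w) ∧
    Function.Surjective Φ :=
  phi_infty_surjective_of_invertible_general φ α Φ hΦ ψ hψ₂
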